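/- arXiv:2002.02157 — 3 statements merged into one kernel-verified Lean document; each statement's English description precedes it below -/
import Mathlib

section
/- For every X ∈ ℝ^{n×2} one has ‖A(X)‖ ≤ 2‖X‖ (indeed ‖A(X)‖² ≤ 2‖X‖²). -/
open Matrix BigOperators

noncomputable section

/-- Frobenius inner product of matrices. -/
def frobInner {m k : ℕ} (X Y : Matrix (Fin m) (Fin k) ℝ) : ℝ :=
  ∑ i, ∑ j, X i j * Y i j

/-- Frobenius norm of a matrix. -/
def frobNorm {m k : ℕ} (X : Matrix (Fin m) (Fin k) ℝ) : ℝ :=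
  Real.sqrt (frobInner X X)

/-- The area integrand `𝒜(X) = √(1 + ‖X‖² + det(XᵀX))`. -/
def Area {n : ℕ} (X : Matrix (Fin n) (Fin 2) ℝ) : ℝ :=
  Real.sqrt (1 + frobInner X X + (Xᵀ * X).det)

/-- The symplectic matrix `J = [[0,1],[−1,0]]`. -/
def symJ : Matrix (Fin 2) (Fin 2) ℝ := !![0, 1; -1, 0]

/-- The gradient of a function on matrix space, given by entrywise partial derivatives. -/
def grad {n : ℕ} (f : Matrix (Fin n) (Fin 2) ℝ → ℝ) (X : Matrix (Fin n) (Fin 2) ℝ) :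
    Matrix (Fin n) (Fin 2) ℝ :=
  fun i j => deriv (fun t : ℝ => f (X + t • Matrix.single i j 1)) 0

/-- `A(X) = D𝒜(X)J`. -/
def matA {n : ℕ} (X : Matrix (Fin n) (Fin 2) ℝ) : Matrix (Fin n) (Fin 2) ℝ :=
  grad Area X * symJ

/-- `B(X) = XᵀD𝒜(X)J − 𝒜(X)J`. -/
def matB {n : ℕ} (X : Matrix (Fin n) (Fin 2) ℝ) : Matrix (Fin 2) (Fin 2) ℝ :=
  Xᵀ * grad Area X * symJ - Area X • symJ

/-! With `G = XᵀX`, the positive semidefinite Gram matrix of the columns,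
`𝒜(X)² = 1 + tr G + det G`. Jacobi's formula `d(det G) = tr(adj G · dG)` gives
`D𝒜(X) = X (I + adj G) / 𝒜(X)`, and since `J` is orthogonal,
`‖A(X)‖² = tr((I + adj G) G (I + adj G)) / 𝒜(X)²`. In terms of the eigenvalues `λ, μ ≥ 0` of `G`
this says `(λ(1+μ)² + μ(1+λ)²) / ((1+λ)(1+μ)) ≤ 2(λ + μ) = 2‖X‖²`. -/

lemma frobInner_eq_trace {m k : ℕ} (X Y : Matrix (Fin m) (Fin k) ℝ) :
    frobInner X Y = trace (Xᵀ * Y) := by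
  simp only [frobInner, trace, diag, mul_apply, transpose_apply]
  exact Finset.sum_comm

lemma frobInner_self_nonneg {m k : ℕ} (X : Matrix (Fin m) (Fin k) ℝ) : 0 ≤ frobInner X X :=
  Finset.sum_nonneg fun _ _ => Finset.sum_nonneg fun _ _ => mul_self_nonneg _

lemma frobNorm_sq {m k : ℕ} (X : Matrix (Fin m) (Fin k) ℝ) : frobNorm X ^ 2 = frobInner X X :=
  Real.sq_sqrt (frobInner_self_nonneg X)

lemma frobInner_single_one {m k : ℕ} (Y : Matrix (Fin m) (Fin k) ℝ) (i : Fin m) (j : Fin k) :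
    frobInner Y (single i j 1) = Y i j := by
  simp [frobInner, single_apply, ite_and]

lemma symJ_mul_transpose : symJ * symJᵀ = 1 := by
  ext a b
  fin_cases a <;> fin_cases b <;> simp [symJ, mul_apply, Fin.sum_univ_two]

lemma frobInner_mul_symJ_self {m : ℕ} (Y : Matrix (Fin m) (Fin 2) ℝ) :
    frobInner (Y * symJ) (Y * symJ) = frobInner Y Y := by
  rw [frobInner_eq_trace, frobInner_eq_trace, transpose_mul, Matrix.mul_assoc, trace_mul_comm,
    Matrix.mul_assoc, Matrix.mul_assoc, symJ_mul_transpose, Matrix.mul_one]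

lemma posSemidef_transpose_mul_self {ι κ : Type*} [Fintype ι] [Finite κ] (X : Matrix ι κ ℝ) :
    (Xᵀ * X).PosSemidef := by
  simpa using posSemidef_conjTranspose_mul_self X

lemma one_add_trace_add_det_pos {ι : Type*} [Fintype ι] [DecidableEq ι] {G : Matrix ι ι ℝ}
    (hG : G.PosSemidef) :
    0 < 1 + trace G + det G := by
  linarith [hG.trace_nonneg, hG.det_nonneg]

lemma transpose_one_add_adjugate_transpose_mul_self {ι κ : Type*} [Fintype ι] [Fintype κ]
    [DecidableEq κ] (X : Matrix ι κ ℝ) :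
    (1 + adjugate (Xᵀ * X))ᵀ = 1 + adjugate (Xᵀ * X) := by
  rw [transpose_add, transpose_one, adjugate_transpose, transpose_mul, transpose_transpose]

lemma Area_eq_sqrt_gram {n : ℕ} (X : Matrix (Fin n) (Fin 2) ℝ) :
    Area X = √(1 + trace (Xᵀ * X) + det (Xᵀ * X)) := by
  rw [Area, frobInner_eq_trace]

lemma hasDerivAt_gram_apply {m k : ℕ} (X H : Matrix (Fin m) (Fin k) ℝ) (a b : Fin k) :
    HasDerivAt (fun t : ℝ => ((X + t • H)ᵀ * (X + t • H)) a b) ((Hᵀ * X + Xᵀ * H) a b) 0 := by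
  have hexp : ∀ t : ℝ, ((X + t • H)ᵀ * (X + t • H)) a b =
      (Xᵀ * X) a b + t * (Hᵀ * X + Xᵀ * H) a b + t ^ 2 * (Hᵀ * H) a b := by
    intro t
    simp only [transpose_add, transpose_smul, Matrix.add_mul, Matrix.mul_add, Matrix.smul_mul,
      Matrix.mul_smul, Matrix.add_apply, Matrix.smul_apply, smul_eq_mul]
    ring
  simp only [hexp]
  have hlin : HasDerivAt (fun t : ℝ => (Xᵀ * X) a b + t * (Hᵀ * X + Xᵀ * H) a b)
      ((Hᵀ * X + Xᵀ * H) a b) 0 := by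
    simpa using (hasDerivAt_mul_const ((Hᵀ * X + Xᵀ * H) a b)).const_add ((Xᵀ * X) a b)
  simpa using hlin.fun_add ((hasDerivAt_pow 2 (0 : ℝ)).mul_const ((Hᵀ * H) a b))

lemma hasDerivAt_one_add_trace_add_det {G : ℝ → Matrix (Fin 2) (Fin 2) ℝ}
    {G' : Matrix (Fin 2) (Fin 2) ℝ} {t : ℝ} (hG : ∀ a b, HasDerivAt (fun s => G s a b) (G' a b) t) :
    HasDerivAt (fun s => 1 + trace (G s) + det (G s)) (trace ((1 + adjugate (G t)) * G')) t := by
  simp only [trace_fin_two, det_fin_two]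
  refine ((((hG 0 0).fun_add (hG 1 1)).const_add 1).fun_add
    (((hG 0 0).fun_mul (hG 1 1)).fun_sub ((hG 0 1).fun_mul (hG 1 0)))).congr_deriv ?_
  simp only [adjugate_fin_two, mul_apply, Fin.sum_univ_two, Matrix.add_apply, one_apply_eq,
    one_apply_ne zero_ne_one, one_apply_ne one_ne_zero, of_apply, cons_val', cons_val_zero,
    cons_val_one, cons_val_fin_one]
  ring

lemma trace_mul_add_transpose_mul_eq_frobInner {m k : ℕ} {M : Matrix (Fin k) (Fin k) ℝ}
    (hM : Mᵀ = M) (X H : Matrix (Fin m) (Fin k) ℝ) :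
    trace (M * (Hᵀ * X + Xᵀ * H)) = 2 * frobInner (X * M) H := by
  have hswap : trace (M * (Hᵀ * X)) = trace (M * (Xᵀ * H)) := by
    rw [← trace_transpose, transpose_mul, transpose_mul, transpose_transpose, hM,
      Matrix.mul_assoc, trace_mul_comm, Matrix.mul_assoc, trace_mul_comm, Matrix.mul_assoc]
  rw [Matrix.mul_add, trace_add, hswap, frobInner_eq_trace, transpose_mul, hM, Matrix.mul_assoc]
  ring

theorem grad_Area {n : ℕ} (X : Matrix (Fin n) (Fin 2) ℝ) :
    grad Area X = (Area X)⁻¹ • (X * (1 + adjugate (Xᵀ * X))) := by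
  ext i j
  have hpos := one_add_trace_add_det_pos (posSemidef_transpose_mul_self X)
  have hderiv := (hasDerivAt_one_add_trace_add_det
    (hasDerivAt_gram_apply X (single i j 1))).sqrt (by simpa using hpos.ne')
  simp only [zero_smul, add_zero, frobInner_single_one, trace_mul_add_transpose_mul_eq_frobInner
    (transpose_one_add_adjugate_transpose_mul_self X)] at hderiv
  simp only [grad, Area_eq_sqrt_gram, hderiv.deriv, Matrix.smul_apply, smul_eq_mul]
  field_simp

lemma trace_one_add_adjugate_mul_mul_le {G : Matrix (Fin 2) (Fin 2) ℝ} (hG : G.PosSemidef) :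
    trace ((1 + adjugate G) * G * (1 + adjugate G)) ≤ 2 * trace G * (1 + trace G + det G) := by
  have hsymm : G 1 0 = G 0 1 := by simpa using hG.isHermitian.apply 0 1
  have h00 : 0 ≤ G 0 0 := hG.diag_nonneg
  have h11 : 0 ≤ G 1 1 := hG.diag_nonneg
  have hdet : 0 ≤ G 0 0 * G 1 1 - G 0 1 * G 0 1 := by
    simpa [det_fin_two, hsymm] using hG.det_nonneg
  simp only [trace_fin_two, det_fin_two, adjugate_fin_two, mul_apply, Fin.sum_univ_two,
    Matrix.add_apply, hsymm, one_apply_eq, one_apply_ne zero_ne_one, one_apply_ne one_ne_zero,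
    of_apply, cons_val', cons_val_zero, cons_val_one, cons_val_fin_one]
  -- the gap is `tr G + 2 (G₀₀² + G₁₁²) + tr G · det G + 4 G₀₁²`
  nlinarith [mul_nonneg (add_nonneg h00 h11) hdet, sq_nonneg (G 0 0), sq_nonneg (G 1 1),
    sq_nonneg (G 0 1)]

lemma frobInner_matA_self {n : ℕ} (X : Matrix (Fin n) (Fin 2) ℝ) :
    frobInner (matA X) (matA X) =
      trace ((1 + adjugate (Xᵀ * X)) * (Xᵀ * X) * (1 + adjugate (Xᵀ * X))) /
        (1 + trace (Xᵀ * X) + det (Xᵀ * X)) := by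
  have hpos := one_add_trace_add_det_pos (posSemidef_transpose_mul_self X)
  rw [matA, frobInner_mul_symJ_self, grad_Area, frobInner_eq_trace, transpose_smul,
    Matrix.smul_mul, Matrix.mul_smul, smul_smul, trace_smul, transpose_mul,
    transpose_one_add_adjugate_transpose_mul_self, Area_eq_sqrt_gram, ← sq, inv_pow,
    Real.sq_sqrt hpos.le, smul_eq_mul, Matrix.mul_assoc, Matrix.mul_assoc, Matrix.mul_assoc,
    inv_mul_eq_div]

lemma frobInner_matA_self_le {n : ℕ} (X : Matrix (Fin n) (Fin 2) ℝ) :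
    frobInner (matA X) (matA X) ≤ 2 * frobInner X X := by
  have hG := posSemidef_transpose_mul_self X
  rw [frobInner_matA_self, div_le_iff₀ (one_add_trace_add_det_pos hG), frobInner_eq_trace]
  exact trace_one_add_adjugate_mul_mul_le hG

theorem norm_matA_le_general {n : ℕ} (X : Matrix (Fin n) (Fin 2) ℝ) :
    frobNorm (matA X) ^ 2 ≤ 2 * frobNorm X ^ 2 ∧ frobNorm (matA X) ≤ 2 * frobNorm X := by
  have hsq : frobNorm (matA X) ^ 2 ≤ 2 * frobNorm X ^ 2 := by
    rw [frobNorm_sq, frobNorm_sq]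
    exact frobInner_matA_self_le X
  refine ⟨hsq, ?_⟩
  have hA : 0 ≤ frobNorm (matA X) := Real.sqrt_nonneg _
  have hX : 0 ≤ frobNorm X := Real.sqrt_nonneg _
  exact (pow_le_pow_iff_left₀ hA (by positivity) two_ne_zero).mp (by nlinarith)

/-- For every `X ∈ ℝ^{n×2}` one has `‖A(X)‖ ≤ 2‖X‖` (indeed `‖A(X)‖² ≤ 2‖X‖²`). -/
theorem norm_matA_le {n : ℕ} (hn : 1 ≤ n) (X : Matrix (Fin n) (Fin 2) ℝ) :
    frobNorm (matA X) ^ 2 ≤ 2 * frobNorm X ^ 2 ∧ frobNorm (matA X) ≤ 2 * frobNorm X :=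
  norm_matA_le_general X

end
end

section
/- For every X ∈ ℝ^{n×2} one has det(B(X)) = 1. -/
/-!
Write `M = XᵀX` and `𝒜 = 𝒜(X)`, so that `𝒜² = 1 + tr M + det M`. Differentiating `tr M` and
`det M` (Jacobi's formula, `d det M = tr (adj M dM)`) along `X + tE` gives
`D𝒜(X) = X (1 + adj M) / 𝒜`, hence `XᵀD𝒜(X) = (M + det M) / 𝒜` because `M adj M = det M`.
Substituting `det M = 𝒜² - 1 - tr M` turns `B(X)` into `(M - (1 + tr M)) J / 𝒜`. For a `2 × 2`
matrix, `det (M - s) = s² - s tr M + det M`, which at `s = 1 + tr M` is `1 + tr M + det M = 𝒜²`;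
as `det J = 1`, `det B(X) = 𝒜² / 𝒜² = 1`.
-/

open Matrix BigOperators

noncomputable section

namespace Matrix

variable {m k R : Type*}

theorem det_sub_one_add_trace_smul_one_fin_two [CommRing R] (M : Matrix (Fin 2) (Fin 2) R) :
    (M - (1 + M.trace) • 1).det = 1 + M.trace + M.det := by
  simp [det_fin_two, trace_fin_two]
  ring

theorem trace_mul_transpose_single_mul_add [Fintype m] [DecidableEq m] [Fintype k] [DecidableEq k]
    [CommSemiring R] {C : Matrix k k R} (hC : C.IsSymm) (X : Matrix m k R) (i : m) (j : k) :
    (C * ((single i j (1 : R))ᵀ * X + Xᵀ * single i j (1 : R))).trace = 2 * (X * C) i j := by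
  set E := single i j (1 : R)
  have h₁ : (C * (Eᵀ * X)).trace = (Eᵀ * (X * C)).trace := by
    rw [trace_mul_comm, Matrix.mul_assoc]
  have h₂ : (C * (Xᵀ * E)).trace = (Eᵀ * (X * C)).trace := by
    rw [← trace_transpose, transpose_mul, transpose_mul, transpose_transpose, hC.eq,
      Matrix.mul_assoc]
  rw [Matrix.mul_add, trace_add, h₁, h₂, transpose_single, trace_single_mul, one_smul, two_mul]

theorem one_le_one_add_trace_add_det_transpose_mul_self [Fintype m] [Fintype k] [DecidableEq k]
    (X : Matrix m k ℝ) : 1 ≤ 1 + (Xᵀ * X).trace + (Xᵀ * X).det := by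
  have hX : (Xᵀ * X).PosSemidef := by
    simpa [conjTranspose_eq_transpose_of_trivial] using posSemidef_conjTranspose_mul_self X
  linarith [hX.trace_nonneg, hX.det_nonneg]

theorem hasDerivAt_trace [Fintype k] {Y : ℝ → Matrix k k ℝ} {Y' : Matrix k k ℝ} {t₀ : ℝ}
    (hY : ∀ a b, HasDerivAt (fun t => Y t a b) (Y' a b) t₀) :
    HasDerivAt (fun t => (Y t).trace) Y'.trace t₀ :=
  HasDerivAt.fun_sum fun a _ => hY a a

theorem hasDerivAt_det_fin_two {Y : ℝ → Matrix (Fin 2) (Fin 2) ℝ} {Y' : Matrix (Fin 2) (Fin 2) ℝ}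
    {t₀ : ℝ} (hY : ∀ a b, HasDerivAt (fun t => Y t a b) (Y' a b) t₀) :
    HasDerivAt (fun t => (Y t).det) ((Y t₀).adjugate * Y').trace t₀ := by
  simp only [det_fin_two]
  refine (((hY 0 0).fun_mul (hY 1 1)).fun_sub ((hY 0 1).fun_mul (hY 1 0))).congr_deriv ?_
  simp [trace_fin_two, adjugate_fin_two, vecMul, dotProduct, Fin.sum_univ_two]
  ring

theorem hasDerivAt_transpose_mul_self_add_smul_apply [Fintype m] (X E : Matrix m k ℝ) (a b : k) :
    HasDerivAt (fun t : ℝ => ((X + t • E)ᵀ * (X + t • E)) a b) ((Eᵀ * X + Xᵀ * E) a b) 0 := by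
  simp only [mul_apply, transpose_apply, add_apply, smul_apply, smul_eq_mul,
    ← Finset.sum_add_distrib]
  have hline (c d : ℝ) : HasDerivAt (fun t : ℝ => c + t * d) d 0 := by
    simpa using ((hasDerivAt_id (0 : ℝ)).mul_const d).const_add c
  refine HasDerivAt.fun_sum fun r _ => ?_
  refine ((hline (X r a) (E r a)).fun_mul (hline (X r b) (E r b))).congr_deriv ?_
  simp

end Matrix

theorem symJ_det : symJ.det = 1 := by
  simp [symJ, det_fin_two]

theorem frobInner_self_eq_trace {m k : ℕ} (X : Matrix (Fin m) (Fin k) ℝ) :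
    frobInner X X = (Xᵀ * X).trace := by
  simp only [frobInner, trace, diag, mul_apply, transpose_apply]
  exact Finset.sum_comm

section

variable {n : ℕ} (X : Matrix (Fin n) (Fin 2) ℝ)

theorem area_eq_sqrt : Area X = √(1 + (Xᵀ * X).trace + (Xᵀ * X).det) := by
  rw [Area, frobInner_self_eq_trace]

theorem area_pos : 0 < Area X := by
  rw [area_eq_sqrt]
  exact Real.sqrt_pos.2 (by linarith [one_le_one_add_trace_add_det_transpose_mul_self X])

theorem area_sq : Area X ^ 2 = 1 + (Xᵀ * X).trace + (Xᵀ * X).det := by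
  rw [area_eq_sqrt, Real.sq_sqrt (by linarith [one_le_one_add_trace_add_det_transpose_mul_self X])]

theorem hasDerivAt_one_add_trace_add_det_line (i : Fin n) (j : Fin 2) :
    HasDerivAt
      (fun t : ℝ => 1 + ((X + t • single i j (1 : ℝ))ᵀ * (X + t • single i j (1 : ℝ))).trace +
        ((X + t • single i j (1 : ℝ))ᵀ * (X + t • single i j (1 : ℝ))).det)
      (2 * (X * (1 + (Xᵀ * X).adjugate) : Matrix (Fin n) (Fin 2) ℝ) i j) 0 := by
  have hS := hasDerivAt_transpose_mul_self_add_smul_apply X (single i j (1 : ℝ))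
  have hM : (Xᵀ * X).IsSymm := by rw [IsSymm, transpose_mul, transpose_transpose]
  refine (((hasDerivAt_trace hS).const_add 1).add (hasDerivAt_det_fin_two hS)).congr_deriv ?_
  rw [← trace_mul_transpose_single_mul_add (isSymm_one.add hM.adjugate), Matrix.add_mul,
    Matrix.one_mul, zero_smul, add_zero]
  simp only [trace_add]

theorem grad_area : grad Area X = (Area X)⁻¹ • (X * (1 + (Xᵀ * X).adjugate)) := by
  ext i j
  have hq := one_le_one_add_trace_add_det_transpose_mul_self X
  have hd := (hasDerivAt_one_add_trace_add_det_line X i j).sqrt (by simp; linarith)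
  simp only [grad, area_eq_sqrt, hd.deriv, zero_smul, add_zero, Matrix.smul_apply, smul_eq_mul]
  ring

theorem transpose_mul_grad_area :
    Xᵀ * grad Area X = (Area X)⁻¹ • (Xᵀ * X + (Xᵀ * X).det • 1) := by
  rw [grad_area, Matrix.mul_smul, Matrix.mul_add, Matrix.mul_one, Matrix.mul_add,
    ← Matrix.mul_assoc, mul_adjugate]

theorem matB_eq : matB X = (Area X)⁻¹ • ((Xᵀ * X - (1 + (Xᵀ * X).trace) • 1) * symJ) := by
  have ha : Area X ≠ 0 := (area_pos X).ne'
  have h : 1 + (Xᵀ * X).trace = Area X ^ 2 - (Xᵀ * X).det := by rw [area_sq]; ring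
  rw [matB, transpose_mul_grad_area, h]
  simp only [Matrix.smul_mul, Matrix.add_mul, Matrix.sub_mul, Matrix.one_mul]
  match_scalars
  · rfl
  · field_simp
    ring

end

theorem matB_det_eq_one_general {n : ℕ} (X : Matrix (Fin n) (Fin 2) ℝ) :
    (matB X).det = 1 := by
  have ha : Area X ≠ 0 := (area_pos X).ne'
  rw [matB_eq, det_smul, det_mul, det_sub_one_add_trace_smul_one_fin_two, symJ_det, ← area_sq,
    Fintype.card_fin]
  field_simp

/-- For every `X ∈ ℝ^{n×2}` one has `det(B(X)) = 1`. -/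
theorem matB_det_eq_one {n : ℕ} (hn : 1 ≤ n) (X : Matrix (Fin n) (Fin 2) ℝ) :
    (matB X).det = 1 :=
  matB_det_eq_one_general X

end
end

section
/- For every X ∈ ℝ^{n×2} and every Y ∈ ℝ^{n×2} with rank(Y) = 1 and ‖Y‖ = 1, the function g(t) = 𝒜(X + tY) satisfies g''(0) ≥ 1/𝒜(X)³. -/
open Matrix BigOperators

noncomputable section

/-- `D²f(X)[Y,Y]`: the second derivative at `t = 0` of `t ↦ f(X + tY)`. -/
def hess {n : ℕ} (f : Matrix (Fin n) (Fin 2) ℝ → ℝ)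
    (X Y : Matrix (Fin n) (Fin 2) ℝ) : ℝ :=
  iteratedDeriv 2 (fun t : ℝ => f (X + t • Y)) 0

/-!
For rank-one `Y = u vᵀ` the `t³` and `t⁴` terms of `det((X + tY)ᵀ(X + tY))` cancel, so
`q(t) = 𝒜(X + tY)² = a t² + b t + c` is a quadratic with `c = 𝒜(X)²` and leading coefficient
`a = |u|²|v|² + (|u|²|p|² - ⟨u, p⟩²)`, `p = XJv`. Thus `a ≥ ‖Y‖² = 1` by Cauchy–Schwarz, and
`q ≥ 1` everywhere since Gram matrices are positive semidefinite. Finally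
`(√q)''(0) = (4ac - b²) / (4 c^{3/2})`, and `q - 1 ≥ 0` has discriminant `b² - 4a(c - 1) ≤ 0`, so
`(√q)''(0) ≥ a / c^{3/2} ≥ 1 / 𝒜(X)³`.
-/
section SqrtQuadratic

variable {a b c : ℝ}

theorem hasDerivAt_sqrt_quadratic (hq : ∀ t, 0 < a * t ^ 2 + b * t + c) (t : ℝ) :
    HasDerivAt (fun s => √(a * s ^ 2 + b * s + c))
      ((2 * a * t + b) / (2 * √(a * t ^ 2 + b * t + c))) t := by
  have hpoly : HasDerivAt (fun s => a * s ^ 2 + b * s + c) (2 * a * t + b) t := by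
    refine (((hasDerivAt_pow 2 t).const_mul a).add ((hasDerivAt_id t).const_mul b)
      |>.add_const c).congr_deriv ?_
    push_cast
    ring
  exact hpoly.sqrt (hq t).ne'

theorem iteratedDeriv_two_sqrt_quadratic (hq : ∀ t, 0 < a * t ^ 2 + b * t + c) :
    iteratedDeriv 2 (fun t => √(a * t ^ 2 + b * t + c)) 0 =
      (4 * a * c - b ^ 2) / (4 * √c ^ 3) := by
  have hc : 0 < c := by simpa using hq 0
  have hderiv : deriv (fun t => √(a * t ^ 2 + b * t + c)) =
      fun t => (2 * a * t + b) / (2 * √(a * t ^ 2 + b * t + c)) :=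
    funext fun t => (hasDerivAt_sqrt_quadratic hq t).deriv
  have hnum : HasDerivAt (fun t : ℝ => 2 * a * t + b) (2 * a) 0 := by
    simpa using ((hasDerivAt_id (0 : ℝ)).const_mul (2 * a)).add_const b
  have hden := (hasDerivAt_sqrt_quadratic hq 0).const_mul 2
  have hquot : HasDerivAt (fun t => (2 * a * t + b) / (2 * √(a * t ^ 2 + b * t + c))) _ 0 :=
    hnum.div hden (by simpa using (Real.sqrt_pos.2 hc).ne')
  rw [iteratedDeriv_succ, iteratedDeriv_one, hderiv, hquot.deriv]
  simp only [mul_zero, zero_add, ne_eq, OfNat.ofNat_ne_zero, not_false_eq_true, zero_pow]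
  field_simp
  rw [Real.sq_sqrt hc.le]
  ring

theorem one_div_sqrt_pow_three_le_iteratedDeriv_two_sqrt_quadratic (ha : 1 ≤ a)
    (hq : ∀ t, 1 ≤ a * t ^ 2 + b * t + c) :
    1 / √c ^ 3 ≤ iteratedDeriv 2 (fun t => √(a * t ^ 2 + b * t + c)) 0 := by
  have hc : 0 < √c := Real.sqrt_pos.2 (by linarith [hq 0])
  have hdisc : b ^ 2 ≤ 4 * a * (c - 1) := by
    have := discrim_le_zero (a := a) (b := b) (c := c - 1) fun t => by nlinarith [hq t]
    rw [discrim] at this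
    linarith
  rw [iteratedDeriv_two_sqrt_quadratic fun t => by linarith [hq t],
    div_le_div_iff₀ (by positivity) (by positivity)]
  nlinarith [pow_pos hc 3]

end SqrtQuadratic

theorem Matrix.exists_eq_vecMulVec_of_rank_le_one {m n K : Type*} [Fintype n] [Field K]
    {A : Matrix m n K} (h : A.rank ≤ 1) : ∃ u v, A = vecMulVec u v := by
  classical
  obtain ⟨w, hw⟩ := finrank_le_one_iff.mp h
  choose c hc using fun j => hw ⟨A *ᵥ Pi.single j 1, LinearMap.mem_range_self A.mulVecLin _⟩
  refine ⟨w, c, ext fun i j => ?_⟩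
  have hcol : c j * (w : m → K) i = A i j := by
    simpa using congr_fun (congr_arg Subtype.val (hc j)) i
  rw [vecMulVec_apply, ← hcol, mul_comm]

theorem Matrix.sq_dotProduct_le {ι : Type*} [Fintype ι] (x y : ι → ℝ) :
    (x ⬝ᵥ y) ^ 2 ≤ (x ⬝ᵥ x) * (y ⬝ᵥ y) := by
  simpa only [dotProduct, sq] using Finset.sum_mul_sq_le_sq_mul_sq Finset.univ x y

theorem Matrix.trace_add_det_transpose_mul_self_nonneg {m : Type*} [Fintype m]
    (Z : Matrix m (Fin 2) ℝ) : 0 ≤ (Zᵀ * Z).trace + (Zᵀ * Z).det := by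
  have hZ : (Zᵀ * Z).PosSemidef := by
    simpa using posSemidef_conjTranspose_mul_self Z
  exact add_nonneg hZ.trace_nonneg hZ.det_nonneg

theorem Matrix.transpose_vecMulVec_mul_vecMulVec {R m n : Type*} [CommRing R] [Fintype m]
    (u : m → R) (v : n → R) : (vecMulVec u v)ᵀ * vecMulVec u v = (u ⬝ᵥ u) • vecMulVec v v := by
  rw [transpose_vecMulVec, vecMulVec_mul_vecMulVec, vecMulVec_smul]

theorem Matrix.transpose_mul_self_add_smul_vecMulVec {R m n : Type*} [CommRing R] [Fintype m]
    (X : Matrix m n R) (u : m → R) (v : n → R) (t : R) :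
    (X + t • vecMulVec u v)ᵀ * (X + t • vecMulVec u v) =
      Xᵀ * X + t • (vecMulVec (u ᵥ* X) v + vecMulVec v (u ᵥ* X)) +
        (t ^ 2 * (u ⬝ᵥ u)) • vecMulVec v v := by
  rw [transpose_add, transpose_smul, Matrix.add_mul, Matrix.mul_add, Matrix.mul_add,
    Matrix.smul_mul, Matrix.smul_mul, Matrix.mul_smul, Matrix.mul_smul,
    transpose_vecMulVec_mul_vecMulVec, mul_vecMulVec, mulVec_transpose, transpose_vecMulVec,
    vecMulVec_mul, smul_smul, smul_add, ← sq, mul_smul]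
  abel

theorem Matrix.exists_trace_add_det_fin_two_eq_quadratic (G : Matrix (Fin 2) (Fin 2) ℝ)
    (w v : Fin 2 → ℝ) (s : ℝ) :
    ∃ b, ∀ t : ℝ,
      (G + t • (vecMulVec w v + vecMulVec v w) + (t ^ 2 * s) • vecMulVec v v).trace +
        (G + t • (vecMulVec w v + vecMulVec v w) + (t ^ 2 * s) • vecMulVec v v).det =
      (s * (v ⬝ᵥ v) + (s * (symJ *ᵥ v ⬝ᵥ G *ᵥ symJ *ᵥ v) - (w ⬝ᵥ symJ *ᵥ v) ^ 2)) * t ^ 2 +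
        b * t + (G.trace + G.det) := by
  refine ⟨2 * (w ⬝ᵥ v) + (symJ *ᵥ w ⬝ᵥ G *ᵥ symJ *ᵥ v) + (symJ *ᵥ v ⬝ᵥ G *ᵥ symJ *ᵥ w),
    fun t => ?_⟩
  simp only [trace_fin_two, det_fin_two, add_apply, smul_apply, vecMulVec_apply, smul_eq_mul,
    symJ, mulVec, dotProduct, Fin.sum_univ_two, of_apply, cons_val', cons_val_fin_one,
    cons_val_zero, cons_val_one]
  ring

theorem frobInner_vecMulVec_self {m k : ℕ} (u : Fin m → ℝ) (v : Fin k → ℝ) :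
    frobInner (vecMulVec u v) (vecMulVec u v) = (u ⬝ᵥ u) * (v ⬝ᵥ v) := by
  rw [frobInner_self_eq_trace, transpose_vecMulVec_mul_vecMulVec, trace_smul, trace_vecMulVec,
    smul_eq_mul]

theorem area_eq_sqrt_one_add_trace_add_det {n : ℕ} (X : Matrix (Fin n) (Fin 2) ℝ) :
    Area X = √(1 + (Xᵀ * X).trace + (Xᵀ * X).det) := by
  rw [Area, frobInner_self_eq_trace]

theorem exists_one_add_trace_add_det_add_smul_vecMulVec_eq_quadratic {n : ℕ}
    (X : Matrix (Fin n) (Fin 2) ℝ) (u : Fin n → ℝ) (v : Fin 2 → ℝ) :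
    ∃ b, ∀ t : ℝ,
      1 + ((X + t • vecMulVec u v)ᵀ * (X + t • vecMulVec u v)).trace +
        ((X + t • vecMulVec u v)ᵀ * (X + t • vecMulVec u v)).det =
      ((u ⬝ᵥ u) * (v ⬝ᵥ v) + ((u ⬝ᵥ u) * (X *ᵥ symJ *ᵥ v ⬝ᵥ X *ᵥ symJ *ᵥ v) -
        (u ⬝ᵥ X *ᵥ symJ *ᵥ v) ^ 2)) * t ^ 2 + b * t + (1 + (Xᵀ * X).trace + (Xᵀ * X).det) := by
  obtain ⟨b, hb⟩ := exists_trace_add_det_fin_two_eq_quadratic (Xᵀ * X) (u ᵥ* X) v (u ⬝ᵥ u)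
  refine ⟨b, fun t => ?_⟩
  rw [transpose_mul_self_add_smul_vecMulVec, add_assoc, hb t, ← dotProduct_mulVec,
    ← mulVec_mulVec, dotProduct_mulVec _ Xᵀ, vecMul_transpose]
  ring

theorem area_second_deriv_lower_bound_general {n : ℕ}
    (X Y : Matrix (Fin n) (Fin 2) ℝ) (hY : Y.rank = 1) (hYnorm : frobNorm Y = 1) :
    iteratedDeriv 2 (fun t : ℝ => Area (X + t • Y)) 0 ≥ 1 / Area X ^ 3 := by
  obtain ⟨u, v, rfl⟩ := exists_eq_vecMulVec_of_rank_le_one hY.le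
  have hYsq : (u ⬝ᵥ u) * (v ⬝ᵥ v) = 1 := by
    rwa [frobNorm, Real.sqrt_eq_one, frobInner_vecMulVec_self] at hYnorm
  obtain ⟨b, hq⟩ := exists_one_add_trace_add_det_add_smul_vecMulVec_eq_quadratic X u v
  have hlead : 1 ≤ (u ⬝ᵥ u) * (v ⬝ᵥ v) + ((u ⬝ᵥ u) * (X *ᵥ symJ *ᵥ v ⬝ᵥ X *ᵥ symJ *ᵥ v) -
      (u ⬝ᵥ X *ᵥ symJ *ᵥ v) ^ 2) := by
    linarith [sq_dotProduct_le u (X *ᵥ symJ *ᵥ v)]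
  have hq_ge_one : ∀ t : ℝ, 1 ≤ _ * t ^ 2 + b * t + _ := fun t => by
    rw [← hq t]
    linarith [trace_add_det_transpose_mul_self_nonneg (X + t • vecMulVec u v)]
  simp only [area_eq_sqrt_one_add_trace_add_det, hq]
  exact one_div_sqrt_pow_three_le_iteratedDeriv_two_sqrt_quadratic hlead hq_ge_one

/-- For every `X ∈ ℝ^{n×2}` and rank-one `Y` with `‖Y‖ = 1`, the function `g(t) = 𝒜(X + tY)`
satisfies `g''(0) ≥ 1/𝒜(X)³`. -/
theorem area_second_deriv_lower_bound {n : ℕ} (hn : 1 ≤ n)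
    (X Y : Matrix (Fin n) (Fin 2) ℝ) (hY : Y.rank = 1) (hYnorm : frobNorm Y = 1) :
    iteratedDeriv 2 (fun t : ℝ => Area (X + t • Y)) 0 ≥ 1 / Area X ^ 3 :=
  area_second_deriv_lower_bound_general X Y hY hYnorm

end
end
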